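/- (Theorem 3.1, case d=2; leading asymptotics of the scattering amplitude.) There exist constants C > 0 and κ₀ > 1 such that for all κ ≥ κ₀ the matrix A(κ) is invertible and for all k, ℓ ∈ ℝ² with |k| = |ℓ| = κ one has |f(k,ℓ) − (ln κ)^{−1} Σ_{j=1}^n (−1/(2π)) e^{i(k−ℓ)·y_j} − (ln κ)^{−2} Σ_{j=1}^n (α_j − i/4) e^{i(k−ℓ)·y_j}| ≤ C (ln κ)^{−3}. -/

import Mathlib

/-!
Write `A(κ) = τ • 1 + M` with `τ = ln κ / (2π)` and `M = Z + G(κ)`, which is bounded in the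
`ℓ^∞` operator norm uniformly in `κ ≥ 1`. As soon as `τ ≥ 2‖M‖`, the a priori estimate
`‖w‖ ≤ ‖(τ • 1 + M) w‖ / (τ - ‖M‖)` gives invertibility and the second-order Neumann expansion
`q = τ⁻¹ b - τ⁻² M b + O(τ⁻³)`. The terms `τ⁻¹ b` and `-τ⁻² Z b` produce exactly the two leading
terms of `f`; what remains is `O(τ⁻³)` plus `τ⁻² G(κ) b = O(τ⁻² κ^{-1/2})`, which is
`O((ln κ)⁻³)` because `ln κ ≤ 2 √κ`.
-/

open Complex Finset Matrix

noncomputable section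

/-- The matrix `A(κ) = (ln κ/(2π)) I + Z + G(κ)` for a two-dimensional multipoint
potential, where `Z = diag(α_j - i/4)`. -/
def A2 (n : ℕ) (α : Fin n → ℂ) (G : ℝ → Matrix (Fin n) (Fin n) ℂ) (κ : ℝ) :
    Matrix (Fin n) (Fin n) ℂ :=
  ((Real.log κ / (2 * Real.pi) : ℝ) : ℂ) • (1 : Matrix (Fin n) (Fin n) ℂ) +
    Matrix.diagonal (fun j => α j - Complex.I / 4) + G κ

/-- `q(k) = A(κ)⁻¹ b(k)` with `b(k)_j = -e^{i k·y_j}`. -/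
def q2 (n : ℕ) (y : Fin n → EuclideanSpace ℝ (Fin 2)) (α : Fin n → ℂ)
    (G : ℝ → Matrix (Fin n) (Fin n) ℂ) (κ : ℝ) (k : EuclideanSpace ℝ (Fin 2)) :
    Fin n → ℂ :=
  (A2 n α G κ)⁻¹ *ᵥ fun j => -Complex.exp (Complex.I * (inner ℝ k (y j) : ℝ))

/-- The scattering amplitude `f(k,ℓ) = (2π)⁻² Σ_j q_j(k) e^{-iℓ·y_j}`. -/
def f2 (n : ℕ) (y : Fin n → EuclideanSpace ℝ (Fin 2)) (α : Fin n → ℂ)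
    (G : ℝ → Matrix (Fin n) (Fin n) ℂ) (κ : ℝ) (k ℓ : EuclideanSpace ℝ (Fin 2)) : ℂ :=
  ((2 * Real.pi : ℂ) ^ 2)⁻¹ *
    ∑ j, q2 n y α G κ k j * Complex.exp (-Complex.I * (inner ℝ ℓ (y j) : ℝ))

open scoped Matrix.Norms.Operator NNReal

namespace Matrix

variable {𝕜 ι : Type*} [NormedField 𝕜] [Fintype ι]

theorem linfty_opNorm_le_card_mul {A : Matrix ι ι 𝕜} {B : ℝ} (hB : 0 ≤ B)
    (h : ∀ i j, ‖A i j‖ ≤ B) : ‖A‖ ≤ Fintype.card ι * B := by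
  lift B to ℝ≥0 using hB
  rw [linfty_opNorm_def, ← NNReal.coe_natCast, ← NNReal.coe_mul, NNReal.coe_le_coe]
  refine Finset.sup_le fun i _ => ?_
  have hrow : ∀ j ∈ Finset.univ, ‖A i j‖₊ ≤ B := fun j _ => h i j
  simpa using Finset.sum_le_card_nsmul _ _ _ hrow

theorem linfty_opNorm_le_card_mul_of_diag_eq_zero {A : Matrix ι ι 𝕜} {B : ℝ} (hB : 0 ≤ B)
    (hdiag : ∀ i, A i i = 0) (h : ∀ i j, i ≠ j → ‖A i j‖ ≤ B) :
    ‖A‖ ≤ Fintype.card ι * B :=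
  linfty_opNorm_le_card_mul hB fun i j => by
    rcases eq_or_ne i j with rfl | hij
    · simpa [hdiag] using hB
    · exact h i j hij

theorem norm_dotProduct_le_card_mul {x u : ι → 𝕜} (hu : ∀ j, ‖u j‖ ≤ 1) :
    ‖x ⬝ᵥ u‖ ≤ Fintype.card ι * ‖x‖ := by
  have hterm : ∀ j ∈ Finset.univ, ‖x j * u j‖ ≤ ‖x‖ := fun j _ => by
    rw [norm_mul]
    exact mul_le_of_le_one_right (norm_nonneg _) (hu j) |>.trans (norm_le_pi_norm x j)
  simpa [dotProduct] using (norm_sum_le _ _).trans (Finset.sum_le_card_nsmul _ _ _ hterm)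

theorem norm_le_of_smul_add_mulVec_eq {M : Matrix ι ι 𝕜} {τ : 𝕜} {w v : ι → 𝕜}
    (hM : ‖M‖ < ‖τ‖) (h : τ • w + M *ᵥ w = v) : ‖w‖ ≤ ‖v‖ / (‖τ‖ - ‖M‖) := by
  rw [le_div_iff₀ (sub_pos.2 hM)]
  have : ‖τ • w‖ ≤ ‖v‖ + ‖M *ᵥ w‖ := by
    rw [eq_sub_of_add_eq h]; exact norm_sub_le _ _
  rw [norm_smul] at this
  nlinarith [linfty_opNorm_mulVec M w]

variable [DecidableEq ι]

theorem isUnit_smul_one_add {M : Matrix ι ι 𝕜} {τ : 𝕜} (hM : ‖M‖ < ‖τ‖) :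
    IsUnit (τ • (1 : Matrix ι ι 𝕜) + M) := by
  rw [isUnit_iff_isUnit_det, isUnit_iff_ne_zero, Ne, ← exists_mulVec_eq_zero_iff]
  rintro ⟨w, hw, hAw⟩
  rw [add_mulVec, smul_mulVec, one_mulVec] at hAw
  have := norm_le_of_smul_add_mulVec_eq hM hAw
  rw [norm_zero, zero_div] at this
  exact hw (norm_le_zero_iff.1 this)

/-- The remainder `r` of the expansion `q = τ⁻¹ b - τ⁻² M b + r` solves `(τ + M) r = τ⁻² M² b`. -/
theorem norm_sub_neumann_le {M : Matrix ι ι 𝕜} {τ : 𝕜} {q b : ι → 𝕜}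
    (hτ0 : τ ≠ 0) (hτ : 2 * ‖M‖ ≤ ‖τ‖) (h : (τ • 1 + M) *ᵥ q = b) :
    ‖q - τ⁻¹ • b + (τ ^ 2)⁻¹ • M *ᵥ b‖ ≤ 2 * ‖M‖ ^ 2 * ‖b‖ / ‖τ‖ ^ 3 := by
  rw [add_mulVec, smul_mulVec, one_mulVec] at h
  have hr : τ • (q - τ⁻¹ • b + (τ ^ 2)⁻¹ • M *ᵥ b) + M *ᵥ (q - τ⁻¹ • b + (τ ^ 2)⁻¹ • M *ᵥ b)
      = (τ ^ 2)⁻¹ • M *ᵥ M *ᵥ b := by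
    have h1 : τ * τ⁻¹ = 1 := mul_inv_cancel₀ hτ0
    have h2 : τ * (τ ^ 2)⁻¹ = τ⁻¹ := by field_simp
    simp only [mulVec_add, mulVec_sub, mulVec_smul, smul_add, smul_sub, smul_smul, h1, h2,
      one_smul]
    rw [← h]
    abel
  have hτpos : 0 < ‖τ‖ := norm_pos_iff.2 hτ0
  have hMMb : ‖(τ ^ 2)⁻¹ • M *ᵥ M *ᵥ b‖ ≤ ‖M‖ ^ 2 * ‖b‖ / ‖τ‖ ^ 2 := by
    rw [norm_smul, norm_inv, norm_pow, inv_mul_eq_div, sq ‖M‖, mul_assoc]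
    gcongr
    exact (linfty_opNorm_mulVec _ _).trans
      (mul_le_mul_of_nonneg_left (linfty_opNorm_mulVec _ _) (norm_nonneg _))
  calc _ ≤ ‖(τ ^ 2)⁻¹ • M *ᵥ M *ᵥ b‖ / (‖τ‖ - ‖M‖) :=
        norm_le_of_smul_add_mulVec_eq (by linarith [norm_nonneg M]) hr
    _ ≤ ‖M‖ ^ 2 * ‖b‖ / ‖τ‖ ^ 2 / (‖τ‖ / 2) := by
        gcongr
        linarith
    _ = 2 * ‖M‖ ^ 2 * ‖b‖ / ‖τ‖ ^ 3 := by field_simp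

theorem norm_sub_first_order_le {Z G : Matrix ι ι 𝕜} {τ : 𝕜} {q b : ι → 𝕜}
    (hτ0 : τ ≠ 0) (hτ : 2 * ‖Z + G‖ ≤ ‖τ‖) (h : (τ • 1 + Z + G) *ᵥ q = b) :
    ‖q - τ⁻¹ • b + (τ ^ 2)⁻¹ • Z *ᵥ b‖ ≤
      2 * ‖Z + G‖ ^ 2 * ‖b‖ / ‖τ‖ ^ 3 + ‖G‖ * ‖b‖ / ‖τ‖ ^ 2 := by
  have hsplit : q - τ⁻¹ • b + (τ ^ 2)⁻¹ • Z *ᵥ b =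
      (q - τ⁻¹ • b + (τ ^ 2)⁻¹ • (Z + G) *ᵥ b) - (τ ^ 2)⁻¹ • G *ᵥ b := by
    rw [add_mulVec, smul_add]; abel
  rw [hsplit]
  refine (norm_sub_le _ _).trans (add_le_add
    (norm_sub_neumann_le hτ0 hτ (by rwa [← add_assoc])) ?_)
  rw [norm_smul, norm_inv, norm_pow, inv_mul_eq_div]
  gcongr
  exact linfty_opNorm_mulVec _ _

end Matrix

theorem Real.log_le_two_mul_sqrt {x : ℝ} (hx : 0 < x) : Real.log x ≤ 2 * √x := by
  have := Real.log_le_sub_one_of_pos (Real.sqrt_pos.2 hx)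
  rw [Real.log_sqrt hx.le] at this
  linarith

section PlaneWave

variable {E : Type*} [NormedAddCommGroup E] [InnerProductSpace ℝ E] {n : ℕ}

/-- The paper's incident vector is `b(k) = -planeWave y k`. -/
def planeWave (y : Fin n → E) (k : E) : Fin n → ℂ := fun j => exp (I * (inner ℝ k (y j) : ℝ))

theorem norm_planeWave_apply (y : Fin n → E) (k : E) (j : Fin n) : ‖planeWave y k j‖ = 1 :=
  norm_exp_I_mul_ofReal _

theorem norm_planeWave_le (y : Fin n → E) (k : E) : ‖planeWave y k‖ ≤ 1 :=
  (pi_norm_le_iff_of_nonneg zero_le_one).2 fun j => (norm_planeWave_apply y k j).le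

theorem planeWave_sub_apply (y : Fin n → E) (k ℓ : E) (j : Fin n) :
    planeWave y (k - ℓ) j = planeWave y k j * planeWave y (-ℓ) j := by
  simp only [planeWave, ← exp_add, inner_sub_left, inner_neg_left]
  push_cast
  ring_nf

end PlaneWave

section ScatteringAmplitude

variable {n : ℕ} (y : Fin n → EuclideanSpace ℝ (Fin 2)) (α : Fin n → ℂ)
  (G : ℝ → Matrix (Fin n) (Fin n) ℂ) {κ : ℝ}

theorem f2_eq_dotProduct (k ℓ : EuclideanSpace ℝ (Fin 2)) :
    f2 n y α G κ k ℓ = ((2 * Real.pi : ℂ) ^ 2)⁻¹ * (q2 n y α G κ k ⬝ᵥ planeWave y (-ℓ)) := by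
  simp only [f2, dotProduct, planeWave, inner_neg_left]
  push_cast
  ring_nf

theorem q2_eq_mulVec (k : EuclideanSpace ℝ (Fin 2)) :
    q2 n y α G κ k = (A2 n α G κ)⁻¹ *ᵥ -planeWave y k := rfl

/-- With `τ = ln κ/(2π)`, the two leading terms are the contributions of `τ⁻¹ b` and
`-τ⁻² Z b` to `f`. -/
theorem f2_sub_leading_terms (hκ : Real.log κ ≠ 0) (k ℓ : EuclideanSpace ℝ (Fin 2)) :
    f2 n y α G κ k ℓ -
        (Real.log κ : ℂ)⁻¹ *
          ∑ j, (-1 / (2 * Real.pi) : ℂ) * exp (I * (inner ℝ (k - ℓ) (y j) : ℝ)) -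
        ((Real.log κ : ℂ) ^ 2)⁻¹ *
          ∑ j, (α j - I / 4) * exp (I * (inner ℝ (k - ℓ) (y j) : ℝ)) =
      ((2 * Real.pi : ℂ) ^ 2)⁻¹ *
        ((q2 n y α G κ k - ((Real.log κ / (2 * Real.pi) : ℝ) : ℂ)⁻¹ • -planeWave y k +
            (((Real.log κ / (2 * Real.pi) : ℝ) : ℂ) ^ 2)⁻¹ •
              diagonal (fun j => α j - I / 4) *ᵥ -planeWave y k) ⬝ᵥ planeWave y (-ℓ)) := by
  have hπ : (Real.pi : ℂ) ≠ 0 := ofReal_ne_zero.2 Real.pi_ne_zero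
  have hL : (Real.log κ : ℂ) ≠ 0 := ofReal_ne_zero.2 hκ
  simp only [f2_eq_dotProduct, dotProduct, Finset.mul_sum,
    ← Finset.sum_sub_distrib, Pi.add_apply, Pi.sub_apply, Pi.smul_apply, Pi.neg_apply,
    mulVec_diagonal, smul_eq_mul]
  refine Finset.sum_congr rfl fun j _ => ?_
  rw [show exp (I * (inner ℝ (k - ℓ) (y j) : ℝ)) = planeWave y (k - ℓ) j from rfl,
    planeWave_sub_apply]
  push_cast
  field_simp
  ring

theorem norm_f2_sub_leading_terms_le {K g : ℝ} (hL : 0 < Real.log κ)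
    (hKL : 4 * Real.pi * K ≤ Real.log κ)
    (hM : ‖diagonal (fun j => α j - I / 4) + G κ‖ ≤ K) (hG : ‖G κ‖ ≤ g / Real.log κ) :
    IsUnit (A2 n α G κ) ∧ ∀ k ℓ : EuclideanSpace ℝ (Fin 2),
      ‖f2 n y α G κ k ℓ -
          (Real.log κ : ℂ)⁻¹ *
            ∑ j, (-1 / (2 * Real.pi) : ℂ) * exp (I * (inner ℝ (k - ℓ) (y j) : ℝ)) -
          ((Real.log κ : ℂ) ^ 2)⁻¹ *
            ∑ j, (α j - I / 4) * exp (I * (inner ℝ (k - ℓ) (y j) : ℝ))‖ ≤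
        n * (4 * Real.pi * K ^ 2 + g) / Real.log κ ^ 3 := by
  set τ : ℂ := ((Real.log κ / (2 * Real.pi) : ℝ) : ℂ)
  have hτ : ‖τ‖ = Real.log κ / (2 * Real.pi) := by
    rw [norm_real, Real.norm_of_nonneg (by positivity)]
  have hτ0 : τ ≠ 0 := norm_pos_iff.1 (by rw [hτ]; positivity)
  have h2M : 2 * ‖diagonal (fun j => α j - I / 4) + G κ‖ ≤ ‖τ‖ := by
    rw [hτ, le_div_iff₀ (by positivity)]
    nlinarith [Real.pi_pos]
  have hunit : IsUnit (A2 n α G κ) := by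
    rw [A2, add_assoc]
    exact isUnit_smul_one_add (by linarith [norm_nonneg τ, norm_pos_iff.2 hτ0])
  refine ⟨hunit, fun k ℓ => ?_⟩
  have hq : A2 n α G κ *ᵥ q2 n y α G κ k = -planeWave y k := by
    rw [q2_eq_mulVec, mulVec_mulVec, mul_nonsing_inv _ ((isUnit_iff_isUnit_det _).1 hunit),
      one_mulVec]
  have hb : ‖-planeWave y k‖ ≤ 1 := (norm_neg _).trans_le (norm_planeWave_le y k)
  have hr := norm_sub_first_order_le hτ0 h2M hq
  rw [f2_sub_leading_terms y α G hL.ne', norm_mul]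
  calc _ ≤ ‖((2 * Real.pi : ℂ) ^ 2)⁻¹‖ *
        (n * (2 * K ^ 2 * 1 / ‖τ‖ ^ 3 + g / Real.log κ * 1 / ‖τ‖ ^ 2)) := by
        gcongr
        refine (norm_dotProduct_le_card_mul (norm_planeWave_apply y (-ℓ) · |>.le)).trans ?_
        rw [Fintype.card_fin]
        gcongr
        refine hr.trans ?_
        gcongr
        exact (norm_nonneg _).trans hG
    _ = n * (4 * Real.pi * K ^ 2 + g) / Real.log κ ^ 3 := by
        rw [hτ, norm_inv, norm_pow, norm_mul, norm_real, Real.norm_of_nonneg Real.pi_pos.le,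
          Complex.norm_ofNat]
        field_simp
        ring

end ScatteringAmplitude

theorem stmt1_general (n : ℕ) (y : Fin n → EuclideanSpace ℝ (Fin 2)) (α : Fin n → ℂ)
    (G : ℝ → Matrix (Fin n) (Fin n) ℂ)
    (hGdiag : ∀ κ : ℝ, 1 ≤ κ → ∀ j, G κ j j = 0)
    (c : ℝ) (hc : 0 < c)
    (hG : ∀ κ : ℝ, 1 ≤ κ → ∀ j j' : Fin n, j ≠ j' → ‖G κ j j'‖ ≤ c / Real.sqrt κ) :
    ∃ C > (0 : ℝ), ∃ κ₀ > (1 : ℝ), ∀ κ ≥ κ₀, IsUnit (A2 n α G κ) ∧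
      ∀ k ℓ : EuclideanSpace ℝ (Fin 2), ‖k‖ = κ → ‖ℓ‖ = κ →
        ‖f2 n y α G κ k ℓ -
            (Real.log κ : ℂ)⁻¹ *
              ∑ j, (-1 / (2 * Real.pi) : ℂ) *
                Complex.exp (Complex.I * (inner ℝ (k - ℓ) (y j) : ℝ)) -
            ((Real.log κ : ℂ) ^ 2)⁻¹ *
              ∑ j, (α j - Complex.I / 4) *
                Complex.exp (Complex.I * (inner ℝ (k - ℓ) (y j) : ℝ))‖ ≤
          C / (Real.log κ) ^ 3 := by
  set K := ‖fun j => α j - I / 4‖ + n * c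
  refine ⟨n * (4 * Real.pi * K ^ 2 + 2 * n * c) + 1, by positivity,
    Real.exp (4 * Real.pi * K + 1), Real.one_lt_exp_iff.2 (by positivity), fun κ hκ => ?_⟩
  have hκ0 : 0 < κ := (Real.exp_pos _).trans_le hκ
  have hL : 4 * Real.pi * K + 1 ≤ Real.log κ := (Real.le_log_iff_exp_le hκ0).2 hκ
  have hL0 : 0 < Real.log κ := by linarith [show 0 ≤ 4 * Real.pi * K by positivity]
  have hκ1 : 1 ≤ κ := (Real.one_le_exp (by positivity)).trans hκ
  have hsqrt : 1 ≤ √κ := Real.one_le_sqrt.2 hκ1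
  have hnormG : ‖G κ‖ ≤ n * (c / √κ) := by
    simpa using linfty_opNorm_le_card_mul_of_diag_eq_zero (by positivity) (hGdiag κ hκ1)
      (hG κ hκ1)
  have hM : ‖diagonal (fun j => α j - I / 4) + G κ‖ ≤ K := by
    refine (norm_add_le _ _).trans ?_
    rw [linfty_opNorm_diagonal]
    exact add_le_add le_rfl (hnormG.trans (by gcongr; exact div_le_self hc.le hsqrt))
  have hG' : ‖G κ‖ ≤ 2 * n * c / Real.log κ := by
    have hc_sqrt : c / √κ ≤ 2 * c / Real.log κ := by
      rw [div_le_div_iff₀ (by positivity) hL0]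
      nlinarith [Real.log_le_two_mul_sqrt hκ0]
    calc _ ≤ n * (c / √κ) := hnormG
      _ ≤ n * (2 * c / Real.log κ) := by gcongr
      _ = _ := by ring
  obtain ⟨hunit, hbound⟩ := norm_f2_sub_leading_terms_le y α G hL0 (by linarith) hM hG'
  refine ⟨hunit, fun k ℓ _ _ => (hbound k ℓ).trans ?_⟩
  gcongr
  linarith

/-- Theorem 3.1, case d = 2: leading asymptotics of the scattering amplitude. -/
theorem stmt1 (n : ℕ) (y : Fin n → EuclideanSpace ℝ (Fin 2)) (α : Fin n → ℂ)
    (hy : Function.Injective y)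
    (G : ℝ → Matrix (Fin n) (Fin n) ℂ)
    (hGdiag : ∀ κ : ℝ, 1 ≤ κ → ∀ j, G κ j j = 0)
    (c : ℝ) (hc : 0 < c)
    (hG : ∀ κ : ℝ, 1 ≤ κ → ∀ j j' : Fin n, j ≠ j' → ‖G κ j j'‖ ≤ c / Real.sqrt κ) :
    ∃ C > (0 : ℝ), ∃ κ₀ > (1 : ℝ), ∀ κ ≥ κ₀, IsUnit (A2 n α G κ) ∧
      ∀ k ℓ : EuclideanSpace ℝ (Fin 2), ‖k‖ = κ → ‖ℓ‖ = κ →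
        ‖f2 n y α G κ k ℓ -
            (Real.log κ : ℂ)⁻¹ *
              ∑ j, (-1 / (2 * Real.pi) : ℂ) *
                Complex.exp (Complex.I * (inner ℝ (k - ℓ) (y j) : ℝ)) -
            ((Real.log κ : ℂ) ^ 2)⁻¹ *
              ∑ j, (α j - Complex.I / 4) *
                Complex.exp (Complex.I * (inner ℝ (k - ℓ) (y j) : ℝ))‖ ≤
          C / (Real.log κ) ^ 3 :=
  stmt1_general n y α G hGdiag c hc hG
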